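/- arXiv:2403.03540 — 5 statements merged into one kernel-verified Lean document; each statement's English description precedes it below -/
import Mathlib

section
/- For Gaussian regression densities P_f, P_g with noise standard deviation σ and functions f, g uniformly bounded by Q, the Hellinger distance satisfies h²(P_f, P_g) ≥ (1/(4σ²)) · exp(−Q²/(2σ²)) · ‖f − g‖_{L²(G)}². -/
/-!
Since `P_f` and `P_g` share the covariate density `G`, Fubini reduces `h²(P_f, P_g)` to the
`G`-average of the squared Hellinger distances between `N(f x, σ²)` and `N(g x, σ²)`. Completing the
square gives `√(φ_a φ_b) = exp (-(a - b)² / (8σ²)) φ_{(a+b)/2}`, so that squared distance is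
`2 - 2 exp (-(a - b)² / (8σ²))`. Finally `1 - exp (-u) ≥ u exp (-U)` for `0 ≤ u ≤ U`, applied with
`u = (a - b)² / (8σ²)` and `U = Q² / (2σ²)`, which bounds `u` because `|a - b| ≤ 2Q`.
-/

open MeasureTheory Real

/-- The density of a univariate Gaussian with mean `m` and standard deviation `σ`. -/
noncomputable def gaussDensity (m σ y : ℝ) : ℝ :=
  (σ * Real.sqrt (2 * π))⁻¹ * Real.exp (-(y - m) ^ 2 / (2 * σ ^ 2))

section GaussDensity

variable {σ : ℝ}

lemma gaussDensity_eq_gaussianPDFReal (hσ : 0 ≤ σ) (m : ℝ) :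
    gaussDensity m σ = ProbabilityTheory.gaussianPDFReal m ⟨σ ^ 2, sq_nonneg σ⟩ := by
  ext y
  have hsqrt : √(2 * π * σ ^ 2) = σ * √(2 * π) := by
    rw [mul_comm, sqrt_mul (sq_nonneg σ), sqrt_sq hσ]
  change _ = (√(2 * π * σ ^ 2))⁻¹ * exp (-(y - m) ^ 2 / (2 * σ ^ 2))
  rw [gaussDensity, hsqrt]

lemma gaussDensity_nonneg (hσ : 0 ≤ σ) (m y : ℝ) : 0 ≤ gaussDensity m σ y := by
  rw [gaussDensity_eq_gaussianPDFReal hσ]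
  exact ProbabilityTheory.gaussianPDFReal_nonneg _ _ _

lemma integrable_gaussDensity (hσ : 0 ≤ σ) (m : ℝ) : Integrable (gaussDensity m σ) := by
  rw [gaussDensity_eq_gaussianPDFReal hσ]
  exact ProbabilityTheory.integrable_gaussianPDFReal _ _

lemma integral_gaussDensity (hσ : 0 < σ) (m : ℝ) : ∫ y, gaussDensity m σ y = 1 := by
  rw [gaussDensity_eq_gaussianPDFReal hσ.le]
  refine ProbabilityTheory.integral_gaussianPDFReal_eq_one m fun h => ?_
  exact (pow_pos hσ 2).ne' (congrArg NNReal.toReal h)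

lemma gaussDensity_mul_gaussDensity (a b y : ℝ) :
    gaussDensity a σ y * gaussDensity b σ y
      = (exp (-(a - b) ^ 2 / (8 * σ ^ 2)) * gaussDensity ((a + b) / 2) σ y) ^ 2 := by
  have hexp : -(y - a) ^ 2 / (2 * σ ^ 2) + -(y - b) ^ 2 / (2 * σ ^ 2)
      = (-(a - b) ^ 2 / (8 * σ ^ 2) + -(y - (a + b) / 2) ^ 2 / (2 * σ ^ 2))
        + (-(a - b) ^ 2 / (8 * σ ^ 2) + -(y - (a + b) / 2) ^ 2 / (2 * σ ^ 2)) := by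
    ring
  simp only [gaussDensity]
  calc _ = (σ * √(2 * π))⁻¹ ^ 2
        * exp (-(y - a) ^ 2 / (2 * σ ^ 2) + -(y - b) ^ 2 / (2 * σ ^ 2)) := by
          rw [exp_add]; ring
    _ = _ := by rw [hexp, exp_add, exp_add]; ring

lemma sqrt_gaussDensity_mul_gaussDensity (hσ : 0 ≤ σ) (a b y : ℝ) :
    √(gaussDensity a σ y * gaussDensity b σ y)
      = exp (-(a - b) ^ 2 / (8 * σ ^ 2)) * gaussDensity ((a + b) / 2) σ y := by
  rw [gaussDensity_mul_gaussDensity,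
    sqrt_sq (mul_nonneg (exp_pos _).le (gaussDensity_nonneg hσ _ _))]

lemma sq_sqrt_gaussDensity_sub (hσ : 0 ≤ σ) (a b y : ℝ) :
    (√(gaussDensity a σ y) - √(gaussDensity b σ y)) ^ 2
      = gaussDensity a σ y + gaussDensity b σ y
          - 2 * (exp (-(a - b) ^ 2 / (8 * σ ^ 2)) * gaussDensity ((a + b) / 2) σ y) := by
  rw [sub_sq, sq_sqrt (gaussDensity_nonneg hσ a y), sq_sqrt (gaussDensity_nonneg hσ b y),
    mul_assoc, ← sqrt_mul (gaussDensity_nonneg hσ a y), sqrt_gaussDensity_mul_gaussDensity hσ]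
  ring

lemma integrable_sq_sqrt_gaussDensity_sub (hσ : 0 ≤ σ) (a b : ℝ) :
    Integrable fun y => (√(gaussDensity a σ y) - √(gaussDensity b σ y)) ^ 2 := by
  simp only [sq_sqrt_gaussDensity_sub hσ]
  exact ((integrable_gaussDensity hσ a).add (integrable_gaussDensity hσ b)).sub
    (((integrable_gaussDensity hσ _).const_mul _).const_mul 2)

lemma integral_sq_sqrt_gaussDensity_sub (hσ : 0 < σ) (a b : ℝ) :
    ∫ y, (√(gaussDensity a σ y) - √(gaussDensity b σ y)) ^ 2
      = 2 - 2 * exp (-(a - b) ^ 2 / (8 * σ ^ 2)) := by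
  have hint := integrable_gaussDensity hσ.le
  have hsum : Integrable fun y => gaussDensity a σ y + gaussDensity b σ y := (hint a).add (hint b)
  simp only [sq_sqrt_gaussDensity_sub hσ.le]
  rw [integral_sub hsum (((hint _).const_mul _).const_mul 2),
    integral_add (hint a) (hint b), integral_const_mul, integral_const_mul,
    integral_gaussDensity hσ, integral_gaussDensity hσ, integral_gaussDensity hσ]
  ring

end GaussDensity

lemma mul_exp_neg_le_one_sub_exp_neg {u U : ℝ} (hu : 0 ≤ u) (huU : u ≤ U) :
    u * exp (-U) ≤ 1 - exp (-u) := by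
  have hmono : u * exp (-U) ≤ u * exp (-u) :=
    mul_le_mul_of_nonneg_left (exp_le_exp.mpr (neg_le_neg huU)) hu
  have hinv : exp (-u) * exp u = 1 := by rw [← exp_add, neg_add_cancel, exp_zero]
  nlinarith [add_one_le_exp u, exp_pos (-u)]

lemma mul_sq_sub_le_two_sub_two_exp {σ Q a b : ℝ} (ha : |a| ≤ Q) (hb : |b| ≤ Q) :
    1 / (4 * σ ^ 2) * exp (-(Q ^ 2) / (2 * σ ^ 2)) * (a - b) ^ 2
      ≤ 2 - 2 * exp (-(a - b) ^ 2 / (8 * σ ^ 2)) := by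
  have hsub : (a - b) ^ 2 ≤ (2 * Q) ^ 2 := by
    rw [← sq_abs]
    have htri := abs_sub a b
    exact pow_le_pow_left₀ (abs_nonneg _) (by linarith) 2
  have hu : (a - b) ^ 2 / (8 * σ ^ 2) ≤ Q ^ 2 / (2 * σ ^ 2) := by
    calc (a - b) ^ 2 / (8 * σ ^ 2) ≤ (2 * Q) ^ 2 / (8 * σ ^ 2) := by gcongr
      _ = Q ^ 2 / (2 * σ ^ 2) := by ring
  have key := mul_exp_neg_le_one_sub_exp_neg (by positivity) hu
  rw [neg_div, neg_div]
  calc _ = 2 * ((a - b) ^ 2 / (8 * σ ^ 2) * exp (-(Q ^ 2 / (2 * σ ^ 2)))) := by ring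
    _ ≤ 2 * (1 - exp (-((a - b) ^ 2 / (8 * σ ^ 2)))) := by gcongr
    _ = _ := by ring

section Regression

variable {X : Type*} [MeasurableSpace X] {μ : Measure X} {G f g : X → ℝ} {σ : ℝ}

lemma integrable_mul_two_sub_two_exp (hGi : Integrable G μ) (hf : Measurable f)
    (hg : Measurable g) :
    Integrable (fun x => G x * (2 - 2 * exp (-(f x - g x) ^ 2 / (8 * σ ^ 2)))) μ := by
  refine hGi.mul_bdd (by fun_prop) (c := 2) (ae_of_all _ fun x => ?_)
  have hle : exp (-(f x - g x) ^ 2 / (8 * σ ^ 2)) ≤ 1 :=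
    exp_le_one_iff.mpr (div_nonpos_of_nonpos_of_nonneg (by nlinarith) (by positivity))
  rw [Real.norm_of_nonneg (by linarith)]
  linarith [exp_pos (-(f x - g x) ^ 2 / (8 * σ ^ 2))]

lemma integral_prod_sq_sqrt_mul_gaussDensity_sub [SigmaFinite μ] (hσ : 0 < σ)
    (hG : Measurable G) (hGnn : ∀ x, 0 ≤ G x) (hGi : Integrable G μ)
    (hf : Measurable f) (hg : Measurable g) :
    ∫ p : X × ℝ, (√(G p.1 * gaussDensity (f p.1) σ p.2) -
        √(G p.1 * gaussDensity (g p.1) σ p.2)) ^ 2 ∂(μ.prod volume)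
      = ∫ x, G x * (2 - 2 * exp (-(f x - g x) ^ 2 / (8 * σ ^ 2))) ∂μ := by
  have hfactor : ∀ x y, (√(G x * gaussDensity (f x) σ y) - √(G x * gaussDensity (g x) σ y)) ^ 2
      = G x * (√(gaussDensity (f x) σ y) - √(gaussDensity (g x) σ y)) ^ 2 := fun x y => by
    rw [sqrt_mul (hGnn x), sqrt_mul (hGnn x), ← mul_sub, mul_pow, sq_sqrt (hGnn x)]
  have hsection : ∀ x, ∫ y, (√(G x * gaussDensity (f x) σ y) -
      √(G x * gaussDensity (g x) σ y)) ^ 2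
        = G x * (2 - 2 * exp (-(f x - g x) ^ 2 / (8 * σ ^ 2))) := fun x => by
    simp only [hfactor, integral_const_mul, integral_sq_sqrt_gaussDensity_sub hσ]
  have hmeas : AEStronglyMeasurable (fun p : X × ℝ => (√(G p.1 * gaussDensity (f p.1) σ p.2) -
      √(G p.1 * gaussDensity (g p.1) σ p.2)) ^ 2) (μ.prod volume) := by
    unfold gaussDensity; fun_prop
  have hint : Integrable (fun p : X × ℝ => (√(G p.1 * gaussDensity (f p.1) σ p.2) -
      √(G p.1 * gaussDensity (g p.1) σ p.2)) ^ 2) (μ.prod volume) := by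
    refine (integrable_prod_iff hmeas).mpr ⟨ae_of_all _ fun x => ?_, ?_⟩
    · simp only [hfactor]
      exact (integrable_sq_sqrt_gaussDensity_sub hσ.le _ _).const_mul _
    · simp only [Real.norm_of_nonneg (sq_nonneg _), hsection]
      exact integrable_mul_two_sub_two_exp hGi hf hg
  rw [integral_prod _ hint]
  simp only [hsection]

end Regression

theorem hellinger_sq_gaussian_regression_ge_general
    {X : Type*} [MeasurableSpace X] (μ : Measure X) [SigmaFinite μ]
    (G f g : X → ℝ) (σ Q : ℝ) (hσ : 0 < σ)
    (hG : Measurable G) (hGnn : ∀ x, 0 ≤ G x) (hGint : ∫ x, G x ∂μ = 1)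
    (hf : Measurable f) (hg : Measurable g)
    (hfQ : ∀ x, |f x| ≤ Q) (hgQ : ∀ x, |g x| ≤ Q) :
    (1 / (4 * σ ^ 2)) * Real.exp (-(Q ^ 2) / (2 * σ ^ 2)) *
        ∫ x, (f x - g x) ^ 2 * G x ∂μ
      ≤ ∫ p : X × ℝ,
          (Real.sqrt (G p.1 * gaussDensity (f p.1) σ p.2) -
            Real.sqrt (G p.1 * gaussDensity (g p.1) σ p.2)) ^ 2 ∂(μ.prod volume) := by
  have hGi : Integrable G μ := Integrable.of_integral_ne_zero (by rw [hGint]; exact one_ne_zero)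
  rw [integral_prod_sq_sqrt_mul_gaussDensity_sub hσ hG hGnn hGi hf hg, ← integral_const_mul]
  refine integral_mono_of_nonneg (ae_of_all _ fun x => ?_)
    (integrable_mul_two_sub_two_exp hGi hf hg) (ae_of_all _ fun x => ?_)
  · exact mul_nonneg (by positivity) (mul_nonneg (sq_nonneg _) (hGnn x))
  · calc _ = G x * (1 / (4 * σ ^ 2) * exp (-(Q ^ 2) / (2 * σ ^ 2)) * (f x - g x) ^ 2) := by ring
      _ ≤ _ := mul_le_mul_of_nonneg_left (mul_sq_sub_le_two_sub_two_exp (hfQ x) (hgQ x)) (hGnn x)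

/-- for Gaussian regression densities with `‖f‖_∞ ≤ Q` and `‖g‖_∞ ≤ Q`,
`h²(P_f, P_g) ≥ (1/(4σ²)) · exp(−Q²/(2σ²)) · ‖f − g‖²_{L²(G)}`. -/
theorem hellinger_sq_gaussian_regression_ge
    {X : Type*} [MeasurableSpace X] (μ : Measure X) [SigmaFinite μ]
    (G f g : X → ℝ) (σ Q : ℝ) (hσ : 0 < σ) (hQ : 0 < Q)
    (hG : Measurable G) (hGnn : ∀ x, 0 ≤ G x) (hGint : ∫ x, G x ∂μ = 1)
    (hf : Measurable f) (hg : Measurable g)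
    (hfQ : ∀ x, |f x| ≤ Q) (hgQ : ∀ x, |g x| ≤ Q) :
    (1 / (4 * σ ^ 2)) * Real.exp (-(Q ^ 2) / (2 * σ ^ 2)) *
        ∫ x, (f x - g x) ^ 2 * G x ∂μ
      ≤ ∫ p : X × ℝ,
          (Real.sqrt (G p.1 * gaussDensity (f p.1) σ p.2) -
            Real.sqrt (G p.1 * gaussDensity (g p.1) σ p.2)) ^ 2 ∂(μ.prod volume) :=
  hellinger_sq_gaussian_regression_ge_general μ G f g σ Q hσ hG hGnn hGint hf hg hfQ hgQ
end

section
/- Let S, S' be two k-dimensional linear subspaces of R^d. Then the directional Hausdorff distance is symmetric on their unit-sphere intersections: sup_{x ∈ S ∩ S_d} dist(x, S' ∩ S_d) = sup_{y ∈ S' ∩ S_d} dist(y, S ∩ S_d), where S_d is the unit sphere of R^d. -/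
/-!
For unit vectors `‖x - y‖² = 2 - 2⟪x, y⟫`, and the largest value of `⟪x, y⟫` over unit vectors
`y ∈ S'` is `‖P_{S'} x‖`. Hence each side equals `√(2 - 2 m)`, where `m` is the smallest value of
`‖P_{S'} x‖` over unit `x ∈ S` (resp. of `‖P_S y‖` over unit `y ∈ S'`), i.e. the smallest
singular value of `P_{S'}|_S : S → S'` (resp. of its adjoint `P_S|_{S'}`). A square operator and
its adjoint are bounded below by the same constants, so the two sides agree.
-/

open Metric Module ContinuousLinearMap

lemma ContinuousLinearMap.mul_norm_le_norm_apply_of_forall_norm_eq_one {𝕜 V W : Type*}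
    [RCLike 𝕜] [NormedAddCommGroup V] [NormedSpace 𝕜 V] [NormedAddCommGroup W] [NormedSpace 𝕜 W]
    (A : V →L[𝕜] W) {c : ℝ} (h : ∀ x, ‖x‖ = 1 → c ≤ ‖A x‖) (x : V) :
    c * ‖x‖ ≤ ‖A x‖ := by
  rcases eq_or_ne x 0 with rfl | hx
  · simp
  have hx' : 0 < ‖x‖ := norm_pos_iff.mpr hx
  have hunit := h ((‖x‖⁻¹ : 𝕜) • x) (by simp [norm_smul, hx'.ne'])
  rw [map_smul, norm_smul, norm_inv, RCLike.norm_ofReal, abs_norm] at hunit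
  calc c * ‖x‖ ≤ ‖x‖⁻¹ * ‖A x‖ * ‖x‖ := by gcongr
    _ = ‖A x‖ := by field_simp

/-- For `c > 0`, `A` is injective, hence onto as `dim V = dim W`; writing `y = A x` gives
`‖A x‖² = ⟪A† A x, x⟫ ≤ ‖A† A x‖ ‖x‖ ≤ ‖A† A x‖ ‖A x‖ / c`. -/
lemma ContinuousLinearMap.mul_norm_le_norm_adjoint_apply {V W : Type*}
    [NormedAddCommGroup V] [InnerProductSpace ℝ V] [FiniteDimensional ℝ V]
    [NormedAddCommGroup W] [InnerProductSpace ℝ W] [FiniteDimensional ℝ W]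
    (hd : finrank ℝ V = finrank ℝ W) (A : V →L[ℝ] W) {c : ℝ} (h : ∀ x, c * ‖x‖ ≤ ‖A x‖) (y : W) :
    c * ‖y‖ ≤ ‖adjoint A y‖ := by
  rcases le_or_gt c 0 with hc | hc
  · exact (mul_nonpos_of_nonpos_of_nonneg hc (norm_nonneg y)).trans (norm_nonneg _)
  have hinj : Function.Injective (A : V →ₗ[ℝ] W) := by
    refine (injective_iff_map_eq_zero _).mpr fun x hx => norm_le_zero_iff.mp ?_
    have := h x
    rw [ContinuousLinearMap.coe_coe] at hx
    rw [hx, norm_zero] at this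
    exact nonpos_of_mul_nonpos_right this hc
  obtain ⟨x, rfl⟩ := (LinearMap.injective_iff_surjective_of_finrank_eq_finrank hd).mp hinj y
  rw [ContinuousLinearMap.coe_coe]
  rcases eq_or_ne x 0 with rfl | hx
  · simp
  have hnorm_sq : ‖A x‖ ^ 2 ≤ ‖adjoint A (A x)‖ * ‖x‖ := by
    calc ‖A x‖ ^ 2 = inner ℝ (adjoint A (A x)) x := by
          rw [adjoint_inner_left, real_inner_self_eq_norm_sq]
      _ ≤ ‖adjoint A (A x)‖ * ‖x‖ := real_inner_le_norm _ _
  refine le_of_mul_le_mul_right ?_ (norm_pos_iff.mpr hx)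
  calc c * ‖A x‖ * ‖x‖ = ‖A x‖ * (c * ‖x‖) := by ring
    _ ≤ ‖A x‖ * ‖A x‖ := by gcongr; exact h x
    _ ≤ ‖adjoint A (A x)‖ * ‖x‖ := by rw [← sq]; exact hnorm_sq

lemma Submodule.adjoint_orthogonalProjectionOnto_comp_subtypeL {𝕜 E : Type*} [RCLike 𝕜]
    [NormedAddCommGroup E] [InnerProductSpace 𝕜 E] [CompleteSpace E]
    (K K' : Submodule 𝕜 E) [CompleteSpace K] [CompleteSpace K'] :
    adjoint (K'.orthogonalProjectionOnto ∘L K.subtypeL)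
      = K.orthogonalProjectionOnto ∘L K'.subtypeL := by
  rw [adjoint_comp, K'.adjoint_orthogonalProjectionOnto, K.adjoint_subtypeL]

lemma infDist_le_two_of_subset_sphere {E : Type*} [SeminormedAddCommGroup E] {s : Set E}
    (hs : s ⊆ sphere 0 1) {x : E} (hx : ‖x‖ = 1) :
    infDist x s ≤ 2 := by
  rcases s.eq_empty_or_nonempty with rfl | ⟨y, hy⟩
  · simp
  have hy1 : ‖y‖ = 1 := mem_sphere_zero_iff_norm.mp (hs hy)
  calc infDist x s ≤ dist x y := infDist_le_dist_of_mem hy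
    _ ≤ ‖x‖ + ‖y‖ := dist_le_norm_add_norm x y
    _ = 2 := by rw [hx, hy1]; norm_num

section UnitSphere

variable {E : Type*} [NormedAddCommGroup E] [InnerProductSpace ℝ E]

lemma dist_eq_sqrt_two_sub_inner {x y : E} (hx : ‖x‖ = 1) (hy : ‖y‖ = 1) :
    dist x y = √(2 - 2 * inner ℝ x y) := by
  rw [← Real.sqrt_sq dist_nonneg, dist_eq_norm, norm_sub_sq_real, hx, hy]
  ring_nf

variable {K : Submodule ℝ E} [K.HasOrthogonalProjection]

lemma Submodule.inner_starProjection_left_of_mem (x : E) {y : E} (hy : y ∈ K) :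
    inner ℝ (K.starProjection x) y = inner ℝ x y := by
  rw [inner_starProjection_left_eq_right, starProjection_eq_self_iff.mpr hy]

lemma Submodule.inner_le_norm_starProjection (x : E) {y : E} (hy : y ∈ K) (hy1 : ‖y‖ = 1) :
    inner ℝ x y ≤ ‖K.starProjection x‖ := by
  calc inner ℝ x y = inner ℝ (K.starProjection x) y := (inner_starProjection_left_of_mem x hy).symm
    _ ≤ ‖K.starProjection x‖ * ‖y‖ := real_inner_le_norm _ _
    _ = ‖K.starProjection x‖ := by rw [hy1, mul_one]

lemma Submodule.exists_inner_eq_norm_starProjection (hK : K ≠ ⊥) (x : E) :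
    ∃ y ∈ K, ‖y‖ = 1 ∧ inner ℝ x y = ‖K.starProjection x‖ := by
  rcases eq_or_ne (K.starProjection x) 0 with hp | hp
  · have : Nontrivial K := Submodule.nontrivial_iff_ne_bot.mpr hK
    obtain ⟨u, hu⟩ := (NormedSpace.sphere_nonempty (x := (0 : K)) (r := 1)).mpr zero_le_one
    refine ⟨u, u.2, by simpa using hu, ?_⟩
    rw [← inner_starProjection_left_of_mem x u.2, hp, inner_zero_left, norm_zero]
  · have hp' : ‖K.starProjection x‖ ≠ 0 := norm_ne_zero_iff.mpr hp
    refine ⟨‖K.starProjection x‖⁻¹ • K.starProjection x,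
      K.smul_mem _ (K.starProjection_apply_mem x), by simp [norm_smul, hp'], ?_⟩
    rw [inner_smul_right, ← inner_starProjection_left_of_mem x (K.starProjection_apply_mem x),
      real_inner_self_eq_norm_sq]
    field_simp

lemma Submodule.infDist_inter_sphere_eq_sqrt (hK : K ≠ ⊥) {x : E} (hx : ‖x‖ = 1) :
    infDist x ((K : Set E) ∩ sphere 0 1) = √(2 - 2 * ‖K.starProjection x‖) := by
  obtain ⟨y₀, hy₀K, hy₀1, hy₀⟩ := K.exists_inner_eq_norm_starProjection hK x
  have hy₀mem : y₀ ∈ (K : Set E) ∩ sphere 0 1 := ⟨hy₀K, mem_sphere_zero_iff_norm.mpr hy₀1⟩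
  refine le_antisymm ?_ ((le_infDist ⟨y₀, hy₀mem⟩).mpr ?_)
  · calc infDist x ((K : Set E) ∩ sphere 0 1) ≤ dist x y₀ := infDist_le_dist_of_mem hy₀mem
      _ = √(2 - 2 * ‖K.starProjection x‖) := by rw [dist_eq_sqrt_two_sub_inner hx hy₀1, hy₀]
  · rintro y ⟨hyK, hy1⟩
    rw [mem_sphere_zero_iff_norm] at hy1
    rw [dist_eq_sqrt_two_sub_inner hx hy1]
    exact Real.sqrt_le_sqrt (by linarith [K.inner_le_norm_starProjection x hyK hy1])

end UnitSphere

variable {E : Type*} [NormedAddCommGroup E] [InnerProductSpace ℝ E] [FiniteDimensional ℝ E]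

/-- The bound `infDist y (S ∩ sphere 0 1) ≤ D` for unit `y ∈ S'` says that `P_S|_{S'}` is bounded
below by `1 - D² / 2`; its adjoint `P_{S'}|_S` then has the same lower bound. -/
lemma iSup_infDist_inter_sphere_le_of_finrank_eq {S S' : Submodule ℝ E}
    (h : finrank ℝ S = finrank ℝ S') :
    (⨆ x : ((S : Set E) ∩ sphere 0 1 : Set E), infDist (x : E) ((S' : Set E) ∩ sphere 0 1))
      ≤ ⨆ y : ((S' : Set E) ∩ sphere 0 1 : Set E), infDist (y : E) ((S : Set E) ∩ sphere 0 1) := by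
  set D := ⨆ y : ((S' : Set E) ∩ sphere 0 1 : Set E), infDist (y : E) ((S : Set E) ∩ sphere 0 1)
  have hD : 0 ≤ D := Real.iSup_nonneg fun _ => infDist_nonneg
  refine Real.iSup_le (fun ⟨x, hxS, hx⟩ => ?_) hD
  rw [mem_sphere_zero_iff_norm] at hx
  have hS : S ≠ ⊥ := fun hS => by
    rw [hS, Submodule.bot_coe, Set.mem_singleton_iff] at hxS
    simp [hxS] at hx
  have hS' : S' ≠ ⊥ := fun hS' => by
    rw [hS', finrank_bot] at h
    exact hS (Submodule.finrank_eq_zero.mp h)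
  have hbdd : BddAbove (Set.range fun y : ((S' : Set E) ∩ sphere 0 1 : Set E) =>
      infDist (y : E) ((S : Set E) ∩ sphere 0 1)) := by
    refine ⟨2, ?_⟩
    rintro _ ⟨⟨y, -, hy⟩, rfl⟩
    exact infDist_le_two_of_subset_sphere Set.inter_subset_right (mem_sphere_zero_iff_norm.mp hy)
  have hbelow : ∀ y : S', ‖y‖ = 1 →
      1 - D ^ 2 / 2 ≤ ‖(S.orthogonalProjectionOnto ∘L S'.subtypeL) y‖ := by
    intro y hy
    have hyD : infDist (y : E) ((S : Set E) ∩ sphere 0 1) ≤ D :=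
      le_ciSup hbdd ⟨y, y.2, mem_sphere_zero_iff_norm.mpr hy⟩
    rw [S.infDist_inter_sphere_eq_sqrt hS (x := (y : E)) hy, Real.sqrt_le_left hD] at hyD
    change 2 - 2 * ‖S.starProjection y‖ ≤ D ^ 2 at hyD
    change _ ≤ ‖S.starProjection y‖
    linarith
  have hx_bound := (S.orthogonalProjectionOnto ∘L S'.subtypeL).mul_norm_le_norm_adjoint_apply
    h.symm (mul_norm_le_norm_apply_of_forall_norm_eq_one _ hbelow) ⟨x, hxS⟩
  rw [Submodule.adjoint_orthogonalProjectionOnto_comp_subtypeL] at hx_bound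
  change (1 - D ^ 2 / 2) * ‖x‖ ≤ ‖S'.starProjection x‖ at hx_bound
  rw [S'.infDist_inter_sphere_eq_sqrt hS' hx, Real.sqrt_le_left hD]
  rw [hx] at hx_bound
  linarith

theorem directional_hausdorff_symmetric_general
    (d k : ℕ)
    (S S' : Submodule ℝ (EuclideanSpace ℝ (Fin d)))
    (hS : Module.finrank ℝ S = k) (hS' : Module.finrank ℝ S' = k) :
    (⨆ x : ((S : Set (EuclideanSpace ℝ (Fin d))) ∩ Metric.sphere 0 1 : Set (EuclideanSpace ℝ (Fin d))),
        Metric.infDist (x : EuclideanSpace ℝ (Fin d))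
          ((S' : Set (EuclideanSpace ℝ (Fin d))) ∩ Metric.sphere 0 1))
      = ⨆ y : ((S' : Set (EuclideanSpace ℝ (Fin d))) ∩ Metric.sphere 0 1 : Set (EuclideanSpace ℝ (Fin d))),
          Metric.infDist (y : EuclideanSpace ℝ (Fin d))
            ((S : Set (EuclideanSpace ℝ (Fin d))) ∩ Metric.sphere 0 1) :=
  le_antisymm (iSup_infDist_inter_sphere_le_of_finrank_eq (hS.trans hS'.symm))
    (iSup_infDist_inter_sphere_le_of_finrank_eq (hS'.trans hS.symm))

/-- for two `k`-dimensional subspaces `S, S'` of `ℝ^d` (`k ≥ 1`), the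
directional Hausdorff distance between their unit-sphere intersections is symmetric:
`sup_{x ∈ S ∩ 𝕊} dist(x, S' ∩ 𝕊) = sup_{y ∈ S' ∩ 𝕊} dist(y, S ∩ 𝕊)`. -/
theorem directional_hausdorff_symmetric
    (d k : ℕ) (hk : 1 ≤ k)
    (S S' : Submodule ℝ (EuclideanSpace ℝ (Fin d)))
    (hS : Module.finrank ℝ S = k) (hS' : Module.finrank ℝ S' = k) :
    (⨆ x : ((S : Set (EuclideanSpace ℝ (Fin d))) ∩ Metric.sphere 0 1 : Set (EuclideanSpace ℝ (Fin d))),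
        Metric.infDist (x : EuclideanSpace ℝ (Fin d))
          ((S' : Set (EuclideanSpace ℝ (Fin d))) ∩ Metric.sphere 0 1))
      = ⨆ y : ((S' : Set (EuclideanSpace ℝ (Fin d))) ∩ Metric.sphere 0 1 : Set (EuclideanSpace ℝ (Fin d))),
          Metric.infDist (y : EuclideanSpace ℝ (Fin d))
            ((S : Set (EuclideanSpace ℝ (Fin d))) ∩ Metric.sphere 0 1) :=
  directional_hausdorff_symmetric_general d k S S' hS hS'
end

section
/- Let (e₁,…,e_d) be an orthonormal basis of R^d and g₁,…,g_b orthonormal vectors with ‖eᵢ − gᵢ‖ ≤ ε for i ≤ b. Let F = span(g₁,…,g_b). Then for each j ∈ {b+1,…,d}, the orthogonal projection of e_j onto F has norm at most √b·ε, i.e., ‖e_j − P_{F^⊥}(e_j)‖ ≤ √b·ε. -/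
/-!
For `i ≤ b` the vectors `eᵢ` are orthogonal to `e_j`, so `⟪gᵢ, e_j⟫ = ⟪gᵢ - eᵢ, e_j⟫` has
absolute value at most `ε`. These are the coordinates of the projection of `e_j` onto `F` in the
orthonormal basis `(gᵢ)`, so that projection has norm at most `√b · ε`.
-/

open Submodule Set
open scoped InnerProductSpace

section

variable {𝕜 E ι : Type*} [RCLike 𝕜] [NormedAddCommGroup E] [InnerProductSpace 𝕜 E]

theorem norm_inner_le_norm_sub_of_inner_eq_zero {u v w : E} (huv : ⟪u, v⟫_𝕜 = 0)
    (hv : ‖v‖ = 1) : ‖⟪w, v⟫_𝕜‖ ≤ ‖u - w‖ :=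
  calc ‖⟪w, v⟫_𝕜‖ = ‖⟪w - u, v⟫_𝕜‖ := by rw [inner_sub_left, huv, sub_zero]
    _ ≤ ‖w - u‖ * ‖v‖ := norm_inner_le_norm _ _
    _ = ‖u - w‖ := by rw [hv, mul_one, norm_sub_rev]

theorem Orthonormal.norm_starProjection_span_le [Fintype ι] {g : ι → E}
    [(span 𝕜 (range g)).HasOrthogonalProjection] (hg : Orthonormal 𝕜 g) {ε : ℝ} (hε : 0 ≤ ε)
    {x : E} (hx : ∀ i, ‖⟪g i, x⟫_𝕜‖ ≤ ε) :
    ‖(span 𝕜 (range g)).starProjection x‖ ≤ √(Fintype.card ι) * ε := by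
  let β : OrthonormalBasis ι 𝕜 (span 𝕜 (range g)) :=
    (Module.Basis.span hg.linearIndependent).toOrthonormalBasis
      (by rw [funext (Module.Basis.span_apply hg.linearIndependent)]; exact orthonormal_span hg)
  have hβ (i : ι) : (β i : E) = g i := by simp [β]
  rw [starProjection_apply, norm_coe]
  refine (β.norm_le_card_mul_iSup_norm_inner _).trans ?_
  gcongr
  refine Real.iSup_le (fun i => ?_) hε
  rw [inner_orthogonalProjectionOnto_eq_of_mem_left, hβ]
  exact hx i

end

/-- with `(e₁,…,e_d)` an orthonormal basis of `ℝ^d`, `g₁,…,g_b` orthonormal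
vectors with `‖eᵢ − gᵢ‖ ≤ ε` for `i ≤ b`, and `F = span(g₁,…,g_b)`, for each `j > b` the
projection of `e_j` onto `F` is small: `‖e_j − P_{F^⊥}(e_j)‖ ≤ √b·ε`. -/
theorem dist_to_orthogonal_complement_le
    (d b : ℕ) (hbd : b ≤ d) (ε : ℝ) (hε : 0 ≤ ε)
    (e : OrthonormalBasis (Fin d) ℝ (EuclideanSpace ℝ (Fin d)))
    (g : Fin b → EuclideanSpace ℝ (Fin d)) (hg : Orthonormal ℝ g)
    (hclose : ∀ i : Fin b, ‖e (Fin.castLE hbd i) - g i‖ ≤ ε)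
    (F : Submodule ℝ (EuclideanSpace ℝ (Fin d)))
    (hF : F = Submodule.span ℝ (Set.range g)) :
    ∀ j : Fin d, b ≤ (j : ℕ) →
      ‖e j - (Submodule.orthogonalProjectionOnto Fᗮ (e j) : EuclideanSpace ℝ (Fin d))‖
        ≤ Real.sqrt b * ε := by
  intro j hj
  subst hF
  rw [← starProjection_apply, starProjection_orthogonal_val, sub_sub_cancel]
  have hinner (i : Fin b) : ‖⟪g i, e j⟫_ℝ‖ ≤ ε := by
    have hij : Fin.castLE hbd i ≠ j := ne_of_lt (i.isLt.trans_le hj)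
    exact (norm_inner_le_norm_sub_of_inner_eq_zero (e.orthonormal.2 hij) (e.orthonormal.1 j)).trans
      (hclose i)
  simpa only [Fintype.card_fin] using hg.norm_starProjection_span_le hε hinner
end

section
/- For any dimension d ≥ 2 and 0 < ε ≤ 1, the ε-covering number of the unit sphere S^{d−1} in R^d with respect to the Euclidean metric satisfies N(ε, S^{d−1}, ‖·‖₂) < √(πd/2) · (4/ε)^{d−1}. -/
/-
For `d ≥ 3`, take a maximal `ε`-separated subset of the sphere: it is an `ε`-net, and the
disjoint balls of radius `x = ε / 2` around its points lie in the shell between radii `1 ± x`.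
Comparing volumes gives `N x^d ≤ (1 + x)^d - (1 - x)^d`, and since this difference divided by
`x` is increasing in `x`, it is at most `2x ((3/2)^d - (1/2)^d)`. Hence `N < 3 (3/ε)^(d-1)`,
which is below `√(πd/2) (4/ε)^(d-1)` because `3^d ≤ 2 · 4^(d-1)` and `√(πd/2) > 2`.

For `d = 2` the volume bound `8/ε` exceeds `4√π/ε`, so the circle is covered directly by
about `π/ε` points equally spaced in angle, using that `θ ↦ e^{iθ}` is `1`-Lipschitz.
-/

open Real Metric Set MeasureTheory Module

-- Only the odd binomial terms survive, and for those `x ^ k / x ≤ t ^ k / t`.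
open Finset in
theorem mul_one_add_pow_sub_one_sub_pow_le {x t : ℝ} (hx : 0 ≤ x) (hxt : x ≤ t) (n : ℕ) :
    t * ((1 + x) ^ n - (1 - x) ^ n) ≤ x * ((1 + t) ^ n - (1 - t) ^ n) := by
  have expand : ∀ y : ℝ, (1 + y) ^ n - (1 - y) ^ n =
      ∑ k ∈ range (n + 1), (y ^ k - (-y) ^ k) * n.choose k := by
    intro y
    rw [add_comm, add_pow, show 1 - y = -y + 1 by ring, add_pow, ← sum_sub_distrib]
    simp [sub_mul]
  rw [expand, expand, mul_sum, mul_sum]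
  refine sum_le_sum fun k _ => ?_
  rcases Nat.even_or_odd k with hk | ⟨m, rfl⟩
  · simp [hk.neg_pow]
  · have ht : 0 ≤ t := hx.trans hxt
    have hpow : x ^ (2 * m) ≤ t ^ (2 * m) := pow_le_pow_left₀ hx hxt _
    simp only [Odd.neg_pow ⟨m, rfl⟩, sub_neg_eq_add, pow_succ]
    have := mul_le_mul_of_nonneg_left hpow
      (by positivity : 0 ≤ 2 * x * t * (n.choose (2 * m + 1) : ℝ))
    nlinarith

section SeparatedNet

variable {E : Type*} [PseudoMetricSpace E]

theorem exists_finset_pairwise_le_dist_subset_iUnion_ball {A : Set E} {ε : ℝ} (hε : 0 < ε)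
    {K : ℕ} (hK : ∀ s : Finset E, ↑s ⊆ A → (s : Set E).Pairwise (ε ≤ dist · ·) → s.card ≤ K) :
    ∃ s : Finset E, ↑s ⊆ A ∧ (s : Set E).Pairwise (ε ≤ dist · ·) ∧ A ⊆ ⋃ c ∈ s, ball c ε := by
  classical
  set cards := {n | ∃ s : Finset E, ↑s ⊆ A ∧ (s : Set E).Pairwise (ε ≤ dist · ·) ∧ s.card = n}
  have hbdd : BddAbove cards := ⟨K, by rintro _ ⟨s, hsA, hs, rfl⟩; exact hK s hsA hs⟩
  obtain ⟨s, hsA, hs, hcard⟩ : sSup cards ∈ cards :=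
    Nat.sSup_mem ⟨0, ∅, by simp, by simp, rfl⟩ hbdd
  refine ⟨s, hsA, hs, fun y hy => ?_⟩
  by_contra hys
  simp only [mem_iUnion, mem_ball, not_exists, not_lt] at hys
  have hy_notMem : y ∉ s := fun h => (hys y h).not_gt (by simpa using hε)
  have hins : (insert y s).card ∈ cards := by
    refine ⟨insert y s, ?_, ?_, rfl⟩
    · simpa [Finset.coe_insert] using insert_subset hy hsA
    · rw [Finset.coe_insert]
      exact hs.insert fun c hc _ => ⟨hys c hc, dist_comm y c ▸ hys c hc⟩
  have := le_csSup hbdd hins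
  rw [Finset.card_insert_of_notMem hy_notMem, hcard] at this
  omega

theorem ball_subset_ball_diff_closedBall_of_mem_sphere {a c : E} {r x : ℝ}
    (hac : a ∈ sphere c r) : ball a x ⊆ ball c (r + x) \ closedBall c (r - x) := by
  intro y hy
  rw [mem_sphere] at hac
  rw [mem_ball] at hy
  rw [mem_sdiff, mem_ball, mem_closedBall, not_le]
  constructor
  · linarith [dist_triangle y a c]
  · linarith [dist_triangle a y c, dist_comm a y]

end SeparatedNet

section Packing

variable {E : Type*} [NormedAddCommGroup E] [NormedSpace ℝ E] [FiniteDimensional ℝ E]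

theorem card_mul_pow_add_pow_le_of_pairwise_le_dist {s : Finset E} {c : E} {r x : ℝ}
    (hx : 0 < x) (hxr : x ≤ r) (hs : ↑s ⊆ sphere c r)
    (hsep : (s : Set E).Pairwise (2 * x ≤ dist · ·)) :
    s.card * x ^ finrank ℝ E + (r - x) ^ finrank ℝ E ≤ (r + x) ^ finrank ℝ E := by
  borelize E
  set μ : Measure E := Measure.addHaar
  have hdisj : (s : Set E).PairwiseDisjoint (ball · x) := fun a ha b hb hab =>
    ball_disjoint_ball (by linarith [hsep ha hb hab])
  have hsub : ⋃ a ∈ s, ball a x ⊆ ball c (r + x) \ closedBall c (r - x) :=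
    iUnion₂_subset fun a ha => ball_subset_ball_diff_closedBall_of_mem_sphere (hs ha)
  have hpack : μ (⋃ a ∈ s, ball a x) + μ (closedBall c (r - x)) ≤ μ (ball c (r + x)) := by
    rw [← measure_union (disjoint_sdiff_left.mono_left hsub) measurableSet_closedBall]
    exact measure_mono <|
      union_subset (hsub.trans sdiff_subset) (closedBall_subset_ball (by linarith))
  rwa [measure_biUnion_finset hdisj fun _ _ => measurableSet_ball,
    Finset.sum_congr rfl fun a _ => μ.addHaar_ball_of_pos a hx, Finset.sum_const, nsmul_eq_mul,
    μ.addHaar_closedBall c (by linarith), μ.addHaar_ball_of_pos c (by linarith), ← mul_assoc,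
    ← add_mul,
    ENNReal.mul_le_mul_iff_left (measure_ball_pos μ 0 one_pos).ne' measure_ball_lt_top.ne,
    ← ENNReal.ofReal_natCast, ← ENNReal.ofReal_mul (by positivity),
    ← ENNReal.ofReal_add (by positivity) (pow_nonneg (by linarith) _),
    ENNReal.ofReal_le_ofReal_iff (pow_nonneg (by linarith) _)] at hpack

theorem exists_finset_sphere_subset_iUnion_ball_card_lt [Nontrivial E] {ε : ℝ} (hε0 : 0 < ε)
    (hε1 : ε ≤ 1) :
    ∃ s : Finset E, sphere (0 : E) 1 ⊆ ⋃ c ∈ s, ball c ε ∧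
      (s.card : ℝ) < 3 * (3 / ε) ^ (finrank ℝ E - 1) := by
  set n := finrank ℝ E
  set x := ε / 2
  have hx : 0 < x := by positivity
  have hx1 : x ≤ 1 / 2 := by linarith [show x = ε / 2 from rfl]
  have hpack : ∀ s : Finset E, ↑s ⊆ sphere (0 : E) 1 → (s : Set E).Pairwise (ε ≤ dist · ·) →
      s.card * x ^ n ≤ (1 + x) ^ n - (1 - x) ^ n := fun s hs hsep => by
    have := card_mul_pow_add_pow_le_of_pairwise_le_dist hx (by linarith) hs
      (by simpa [x, mul_div_cancel₀] using hsep)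
    linarith
  obtain ⟨s, hs, hsep, hcov⟩ := exists_finset_pairwise_le_dist_subset_iUnion_ball hε0
    (K := ⌊((1 + x) ^ n - (1 - x) ^ n) / x ^ n⌋₊) fun s hs hsep =>
      Nat.le_floor <| (le_div_iff₀ (by positivity)).mpr (hpack s hs hsep)
  refine ⟨s, hcov, ?_⟩
  obtain ⟨m, hm⟩ : ∃ m, n = m + 1 := Nat.exists_eq_succ_of_ne_zero finrank_pos.ne'
  have hcard := hpack s hs hsep
  have hbinom : 1 / 2 * ((1 + x) ^ n - (1 - x) ^ n) ≤ x * ((3 / 2) ^ n - (1 / 2) ^ n) := by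
    convert mul_one_add_pow_sub_one_sub_pow_le hx.le hx1 n using 4 <;> norm_num
  rw [hm] at hcard hbinom
  have key : s.card * x ^ m * x < 3 * (3 / 2) ^ m * x := by
    have : (0 : ℝ) < (1 / 2) ^ (m + 1) := by positivity
    rw [mul_assoc, ← pow_succ]
    nlinarith [pow_succ (3 / 2 : ℝ) m]
  rw [hm, Nat.add_sub_cancel, show 3 / ε = 3 / 2 / x by ring, div_pow, mul_div_assoc',
    lt_div_iff₀ (by positivity)]
  exact lt_of_mul_lt_mul_right key hx.le

end Packing

theorem exists_finset_image_Icc_subset_iUnion_ball {E : Type*} [PseudoMetricSpace E] {f : ℝ → E}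
    (hf : LipschitzWith 1 f) {a b ε : ℝ} (hab : a < b) (hε : 0 < ε) :
    ∃ s : Finset E, f '' Icc a b ⊆ ⋃ c ∈ s, ball c ε ∧ (s.card : ℝ) ≤ (b - a) / (2 * ε) + 2 := by
  classical
  set n := ⌊(b - a) / (2 * ε)⌋₊ + 1
  have hn : (b - a) / (2 * ε) < n := by simpa [n] using Nat.lt_floor_add_one ((b - a) / (2 * ε))
  set h := (b - a) / n
  have hh : 0 < h := div_pos (by linarith) (by positivity)
  have hhε : h < 2 * ε := by
    rw [div_lt_iff₀ (by positivity)] at hn ⊢; linarith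
  have hnh : n * h = b - a := mul_div_cancel₀ _ (by positivity)
  refine ⟨(Finset.range (n + 1)).image fun k : ℕ => f (a + k * h), ?_, ?_⟩
  · rintro _ ⟨t, ⟨hat, htb⟩, rfl⟩
    set y := (t - a) / h
    have hy0 : 0 ≤ y := div_nonneg (by linarith) hh.le
    have hyn : y ≤ n := by rw [div_le_iff₀ hh, hnh]; linarith
    set k := ⌊y + 1 / 2⌋₊
    have hk_le : (k : ℝ) ≤ y + 1 / 2 := Nat.floor_le (by linarith)
    have hk_gt : y + 1 / 2 < k + 1 := Nat.lt_floor_add_one _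
    have hkn : k < n + 1 := by exact_mod_cast (show (k : ℝ) < n + 1 by linarith)
    simp only [mem_iUnion, mem_ball, Finset.mem_image, Finset.mem_range, exists_prop]
    refine ⟨_, ⟨k, hkn, rfl⟩, (hf.dist_le_mul _ _).trans_lt ?_⟩
    have hty : t - a = y * h := by simp only [y]; field_simp
    rw [NNReal.coe_one, one_mul, Real.dist_eq, show t - (a + k * h) = (y - k) * h by linarith,
      abs_mul, abs_of_pos hh]
    nlinarith [abs_le.mpr (⟨by linarith, by linarith⟩ : -(1 / 2) ≤ y - k ∧ y - k ≤ 1 / 2)]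
  · calc ((Finset.range (n + 1)).image _).card ≤ ((n + 1 : ℕ) : ℝ) := by
          exact_mod_cast Finset.card_image_le.trans (Finset.card_range _).le
      _ ≤ (b - a) / (2 * ε) + 2 := by
          push_cast [n]; linarith [Nat.floor_le (by positivity : 0 ≤ (b - a) / (2 * ε))]

theorem lipschitzWith_exp_ofReal_mul_I : LipschitzWith 1 fun θ : ℝ => Complex.exp (θ * Complex.I) :=
  LipschitzWith.of_dist_le_mul fun θ φ => by
    have : Complex.exp (θ * Complex.I) - Complex.exp (φ * Complex.I) =
        Complex.exp (φ * Complex.I) * (Complex.exp (Complex.I * (θ - φ : ℝ)) - 1) := by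
      rw [mul_sub, ← Complex.exp_add, mul_one]; push_cast; ring_nf
    rw [Complex.dist_eq, this, norm_mul, Complex.norm_exp_ofReal_mul_I, one_mul, NNReal.coe_one,
      one_mul, Real.dist_eq]
    exact Real.norm_exp_I_mul_ofReal_sub_one_le

theorem exists_finset_sphere_subset_iUnion_ball_of_fin_two {ε : ℝ} (hε : 0 < ε) :
    ∃ s : Finset (EuclideanSpace ℝ (Fin 2)),
      sphere 0 1 ⊆ ⋃ c ∈ s, ball c ε ∧ (s.card : ℝ) ≤ π / ε + 2 := by
  let e := Complex.orthonormalBasisOneI.repr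
  have hf := e.lipschitz.comp lipschitzWith_exp_ofReal_mul_I
  rw [one_mul] at hf
  obtain ⟨s, hcov, hcard⟩ :=
    exists_finset_image_Icc_subset_iUnion_ball hf (neg_lt_self pi_pos) hε
  refine ⟨s, fun y hy => hcov ⟨Complex.arg (e.symm y),
    ⟨(Complex.neg_pi_lt_arg _).le, Complex.arg_le_pi _⟩, ?_⟩, ?_⟩
  · have hnorm : ‖e.symm y‖ = 1 := by simpa using hy
    simpa [hnorm] using congrArg e (Complex.norm_mul_exp_arg_mul_I (e.symm y))
  · convert hcard using 2; field_simp; ring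

theorem three_pow_succ_le_two_mul_four_pow {n : ℕ} (hn : 2 ≤ n) : 3 ^ (n + 1) ≤ 2 * 4 ^ n := by
  induction n, hn using Nat.le_induction with
  | base => norm_num
  | succ n _ ih => rw [pow_succ, pow_succ]; omega

theorem two_lt_sqrt_pi_mul_div_two {n : ℕ} (hn : 3 ≤ n) : 2 < √(π * n / 2) := by
  have : (3 : ℝ) ≤ n := by exact_mod_cast hn
  rw [lt_sqrt zero_le_two]
  nlinarith [pi_gt_three]

theorem pi_add_two_lt_four_mul_sqrt_pi : π + 2 < 4 * √π := by
  have : (1.7 : ℝ) < √π := by rw [lt_sqrt (by norm_num)]; linarith [pi_gt_three]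
  linarith [pi_lt_d2]

/-- for `d ≥ 2` and `0 < ε ≤ 1`, the sphere `S^{d−1} ⊆ ℝ^d` can be covered
by fewer than `√(πd/2)·(4/ε)^{d−1}` open Euclidean balls of radius `ε`; i.e. the
covering number satisfies `N(ε, S^{d−1}, ‖·‖₂) < √(πd/2)·(4/ε)^{d−1}`. -/
theorem sphere_covering_number_lt
    (d : ℕ) (hd : 2 ≤ d) (ε : ℝ) (hε0 : 0 < ε) (hε1 : ε ≤ 1) :
    ∃ s : Finset (EuclideanSpace ℝ (Fin d)),
      (Metric.sphere (0 : EuclideanSpace ℝ (Fin d)) 1 ⊆ ⋃ c ∈ s, Metric.ball c ε) ∧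
      (s.card : ℝ) < Real.sqrt (π * d / 2) * (4 / ε) ^ (d - 1) := by
  obtain rfl | hd3 := hd.eq_or_lt
  · obtain ⟨s, hcov, hcard⟩ := exists_finset_sphere_subset_iUnion_ball_of_fin_two hε0
    refine ⟨s, hcov, hcard.trans_lt ?_⟩
    calc π / ε + 2 ≤ (π + 2) / ε := by rw [add_div]; gcongr; exact le_div_self zero_le_two hε0 hε1
      _ < 4 * √π / ε := by gcongr; exact pi_add_two_lt_four_mul_sqrt_pi
      _ = √(π * (2 : ℕ) / 2) * (4 / ε) ^ (2 - 1) := by norm_num; ring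
  · obtain ⟨m, rfl⟩ : ∃ m, d = m + 1 := ⟨d - 1, by omega⟩
    obtain ⟨s, hcov, hcard⟩ := exists_finset_sphere_subset_iUnion_ball_card_lt
      (E := EuclideanSpace ℝ (Fin (m + 1))) hε0 hε1
    rw [finrank_euclideanSpace_fin] at hcard
    refine ⟨s, hcov, hcard.trans ?_⟩
    rw [Nat.add_sub_cancel, div_pow, div_pow, mul_div_assoc', mul_div_assoc']
    gcongr ?_ / _
    calc (3 : ℝ) * 3 ^ m = 3 ^ (m + 1) := by ring
      _ ≤ 2 * 4 ^ m := by exact_mod_cast three_pow_succ_le_two_mul_four_pow (by omega)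
      _ < √(π * ↑(m + 1) / 2) * 4 ^ m := by gcongr; exact two_lt_sqrt_pi_mul_div_two hd3
end

section
/- Let g : U → R be continuously differentiable on an open subset U of R^k, let x₀ ∈ U and v be a unit vector with |⟨∇g(x), v⟩| ≥ r > 0 for all x in a ball B of radius L around x₀. Then for every 0 < l ≤ L, every t with ‖t − x₀‖ ≤ L/2, and every constant c ∈ R, the integral ∫_{−l/2}^{l/2} |g(t + y v) − c|² dy ≥ r²·l³/24. -/
/-!
Along the segment `y ↦ t + y • v` the function `φ y = g (t + y • v)` has derivative
`⟪∇g, v⟫`, of modulus at least `r`; by Darboux's theorem its sign is constant, so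
`|φ y - φ x| ≥ r |y - x|`. Pairing `y` with `-y` gives
`|φ y - c|² + |φ (-y) - c|² ≥ (φ y - φ (-y))² / 2 ≥ 2 r² y²`, and integrating over
`[-l/2, l/2]` yields `r² l³ / 12`, twice the claimed bound.
-/

open MeasureTheory Set
open scoped RealInnerProductSpace

theorem Convex.mul_sub_le_sub_of_le_hasDerivAt {s : Set ℝ} (hs : Convex ℝ s) {φ φ' : ℝ → ℝ}
    (hφ : ∀ y ∈ s, HasDerivAt φ (φ' y) y) {r : ℝ} (hr : ∀ y ∈ s, r ≤ φ' y)
    {x y : ℝ} (hx : x ∈ s) (hy : y ∈ s) (hxy : x ≤ y) : r * (y - x) ≤ φ y - φ x :=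
  hs.mul_sub_le_image_sub_of_le_deriv (fun z hz => (hφ z hz).continuousAt.continuousWithinAt)
    (fun z hz => (hφ z (interior_subset hz)).differentiableAt.differentiableWithinAt)
    (fun z hz => (hφ z (interior_subset hz)).deriv ▸ hr z (interior_subset hz)) x hx y hy hxy

/-- By Darboux's theorem a derivative bounded away from zero has constant sign. -/
theorem Convex.mul_abs_sub_le_abs_sub_of_le_abs_hasDerivAt {s : Set ℝ} (hs : Convex ℝ s)
    {φ φ' : ℝ → ℝ} (hφ : ∀ y ∈ s, HasDerivAt φ (φ' y) y) {r : ℝ} (hr : 0 < r)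
    (hφ' : ∀ y ∈ s, r ≤ |φ' y|) {x y : ℝ} (hx : x ∈ s) (hy : y ∈ s) :
    r * |y - x| ≤ |φ y - φ x| := by
  wlog hxy : x ≤ y generalizing x y
  · rw [abs_sub_comm y, abs_sub_comm (φ y)]
    exact this hy hx (le_of_not_ge hxy)
  rw [abs_of_nonneg (sub_nonneg.2 hxy)]
  have hne : ∀ z ∈ s, φ' z ≠ 0 := fun z hz h0 => by
    have := hφ' z hz
    rw [h0, abs_zero] at this
    exact hr.not_ge this
  rcases hasDerivWithinAt_forall_lt_or_forall_gt_of_forall_ne hs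
    (fun z hz => (hφ z hz).hasDerivWithinAt) hne with hneg | hpos
  · have hle : ∀ z ∈ s, r ≤ -φ' z := fun z hz => abs_of_neg (hneg z hz) ▸ hφ' z hz
    calc r * (y - x) ≤ -φ y - -φ x :=
          hs.mul_sub_le_sub_of_le_hasDerivAt (fun z hz => (hφ z hz).neg) hle hx hy hxy
      _ ≤ |φ y - φ x| := by rw [← abs_neg]; exact le_of_eq_of_le (by ring) (le_abs_self _)
  · have hle : ∀ z ∈ s, r ≤ φ' z := fun z hz => abs_of_pos (hpos z hz) ▸ hφ' z hz
    exact (hs.mul_sub_le_sub_of_le_hasDerivAt hφ hle hx hy hxy).trans (le_abs_self _)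

theorem le_integral_sq_abs_sub_of_mul_abs_sub_le {φ : ℝ → ℝ} {a r : ℝ} (ha : 0 ≤ a)
    (hr : 0 ≤ r) (hφc : ContinuousOn φ (Icc (-a) a))
    (hφ : ∀ x ∈ Icc (-a) a, ∀ y ∈ Icc (-a) a, r * |y - x| ≤ |φ y - φ x|) (c : ℝ) :
    2 * r ^ 2 * a ^ 3 / 3 ≤ ∫ y in (-a)..a, |φ y - c| ^ 2 := by
  simp_rw [sq_abs]
  set f : ℝ → ℝ := fun y => (φ y - c) ^ 2
  have hneg_mem : ∀ y ∈ Icc (-a) a, -y ∈ Icc (-a) a := fun y hy =>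
    ⟨by linarith [hy.2], by linarith [hy.1]⟩
  have hf : IntervalIntegrable f volume (-a) a :=
    ((hφc.sub continuousOn_const).pow 2).intervalIntegrable_of_Icc (by linarith)
  have hf_neg : IntervalIntegrable (fun y => f (-y)) volume (-a) a :=
    (((hφc.comp continuousOn_neg hneg_mem).sub continuousOn_const).pow 2).intervalIntegrable_of_Icc
      (by linarith)
  have hpair : ∀ y ∈ Icc (-a) a, 2 * r ^ 2 * y ^ 2 ≤ f y + f (-y) := by
    intro y hy
    have h := hφ (-y) (hneg_mem y hy) y hy
    rw [sub_neg_eq_add, ← two_mul, abs_mul, abs_two] at h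
    have h2 : 4 * r ^ 2 * y ^ 2 ≤ (φ y - φ (-y)) ^ 2 := by
      calc 4 * r ^ 2 * y ^ 2 = (r * (2 * |y|)) ^ 2 := by rw [mul_pow, mul_pow, sq_abs]; ring
        _ ≤ |φ y - φ (-y)| ^ 2 := pow_le_pow_left₀ (by positivity) h 2
        _ = (φ y - φ (-y)) ^ 2 := sq_abs _
    simp only [f]
    nlinarith [sq_nonneg (φ y + φ (-y) - 2 * c)]
  have hsymm : ∫ y in (-a)..a, f (-y) = ∫ y in (-a)..a, f y := by
    rw [intervalIntegral.integral_comp_neg, neg_neg]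
  calc 2 * r ^ 2 * a ^ 3 / 3 = (∫ y in (-a)..a, 2 * r ^ 2 * y ^ 2) / 2 := by
        rw [intervalIntegral.integral_const_mul, integral_pow]; ring
    _ ≤ (∫ y in (-a)..a, (f y + f (-y))) / 2 := by
        gcongr
        have hquad : Continuous fun y : ℝ => 2 * r ^ 2 * y ^ 2 := by fun_prop
        exact intervalIntegral.integral_mono_on (by linarith) (hquad.intervalIntegrable _ _)
          (hf.add hf_neg) hpair
    _ = ∫ y in (-a)..a, f y := by
        rw [intervalIntegral.integral_add hf hf_neg, hsymm]
        ring

theorem DifferentiableAt.hasDerivAt_comp_add_smul {F : Type*} [NormedAddCommGroup F]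
    [InnerProductSpace ℝ F] [CompleteSpace F] {g : F → ℝ} {t v : F} {y : ℝ}
    (hg : DifferentiableAt ℝ g (t + y • v)) :
    HasDerivAt (fun s : ℝ => g (t + s • v)) ⟪gradient g (t + y • v), v⟫ y := by
  have hline : HasDerivAt (fun s : ℝ => t + s • v) v y := by
    simpa using ((hasDerivAt_id y).smul_const v).const_add t
  rw [gradient, InnerProductSpace.toDual_symm_apply]
  exact hg.hasFDerivAt.comp_hasDerivAt y hline

theorem directional_nonconstancy_integral_lower_bound_general
    (k : ℕ) (U : Set (EuclideanSpace ℝ (Fin k))) (hU : IsOpen U)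
    (g : EuclideanSpace ℝ (Fin k) → ℝ) (hg : ContDiffOn ℝ 1 g U)
    (x₀ : EuclideanSpace ℝ (Fin k)) (L r : ℝ) (hr : 0 < r)
    (hball : Metric.closedBall x₀ L ⊆ U)
    (v : EuclideanSpace ℝ (Fin k)) (hv : ‖v‖ = 1)
    (hgrad : ∀ x ∈ Metric.closedBall x₀ L, r ≤ |(inner ℝ (gradient g x) v : ℝ)|) :
    ∀ l : ℝ, 0 < l → l ≤ L → ∀ t : EuclideanSpace ℝ (Fin k), ‖t - x₀‖ ≤ L / 2 →
      ∀ c : ℝ, r ^ 2 * l ^ 3 / 24 ≤ ∫ y in (-(l / 2))..(l / 2), |g (t + y • v) - c| ^ 2 := by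
  intro l hl hlL t ht c
  have hmem : ∀ y ∈ Icc (-(l / 2)) (l / 2), t + y • v ∈ Metric.closedBall x₀ L := by
    intro y hy
    rw [Metric.mem_closedBall, dist_eq_norm, add_sub_right_comm]
    calc ‖t - x₀ + y • v‖ ≤ ‖t - x₀‖ + |y| := by
          simpa [norm_smul, hv] using norm_add_le (t - x₀) (y • v)
      _ ≤ L := by linarith [abs_le.2 hy]
  have hderiv : ∀ y ∈ Icc (-(l / 2)) (l / 2), HasDerivAt (fun s : ℝ => g (t + s • v))
      ⟪gradient g (t + y • v), v⟫ y := fun y hy =>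
    ((hg.differentiableOn one_ne_zero).differentiableAt
      (hU.mem_nhds (hball (hmem y hy)))).hasDerivAt_comp_add_smul
  calc r ^ 2 * l ^ 3 / 24 ≤ 2 * r ^ 2 * (l / 2) ^ 3 / 3 := by
        have : 0 ≤ r ^ 2 * l ^ 3 := by positivity
        linarith
    _ ≤ _ := le_integral_sq_abs_sub_of_mul_abs_sub_le (by positivity) hr.le
        (fun y hy => (hderiv y hy).continuousAt.continuousWithinAt)
        (fun _ hx _ hy => (convex_Icc _ _).mul_abs_sub_le_abs_sub_of_le_abs_hasDerivAt hderiv hr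
          (fun z hz => hgrad _ (hmem z hz)) hx hy) c

/-- if `g` is continuously differentiable on an open set `U ⊆ ℝ^k`
containing the closed ball of radius `L` around `x₀`, `v` is a unit vector and
`|⟨∇g(x), v⟩| ≥ r > 0` on this ball, then for every `0 < l ≤ L`, every `t` with
`‖t − x₀‖ ≤ L/2` and every constant `c`,
`∫_{−l/2}^{l/2} |g(t + y·v) − c|² dy ≥ r²·l³/24`. -/
theorem directional_nonconstancy_integral_lower_bound
    (k : ℕ) (U : Set (EuclideanSpace ℝ (Fin k))) (hU : IsOpen U)
    (g : EuclideanSpace ℝ (Fin k) → ℝ) (hg : ContDiffOn ℝ 1 g U)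
    (x₀ : EuclideanSpace ℝ (Fin k)) (L r : ℝ) (hL : 0 < L) (hr : 0 < r)
    (hball : Metric.closedBall x₀ L ⊆ U)
    (v : EuclideanSpace ℝ (Fin k)) (hv : ‖v‖ = 1)
    (hgrad : ∀ x ∈ Metric.closedBall x₀ L, r ≤ |(inner ℝ (gradient g x) v : ℝ)|) :
    ∀ l : ℝ, 0 < l → l ≤ L → ∀ t : EuclideanSpace ℝ (Fin k), ‖t - x₀‖ ≤ L / 2 →
      ∀ c : ℝ, r ^ 2 * l ^ 3 / 24 ≤ ∫ y in (-(l / 2))..(l / 2), |g (t + y • v) - c| ^ 2 :=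
  directional_nonconstancy_integral_lower_bound_general k U hU g hg x₀ L r hr hball v hv hgrad
end
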